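/- arXiv:1701.02043 — 2 statements merged into one kernel-verified Lean document; each statement's English description precedes it below -/
import Mathlib

section
/- For a spherical cap C of angle θ ∈ (0, π/2) on the sphere of radius R = √(mN) in R^m, its surface area μ(C) = (2π^{(m-1)/2}/Γ((m-1)/2)) (mN)^{(m-2)/2} ∫₀^θ sin^{m-2}ρ dρ satisfies, for every ε > 0 and all sufficiently large m: 2^{(m/2)[log(2πeN sin²θ) − ε]} ≤ μ(C) ≤ 2^{(m/2)[log(2πeN sin²θ) + ε]}. -/
/-!
Taking logarithms, the claim is that `log μ(C) / (m / 2) → log (2πeN sin²θ)`. The sphere factor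
`2π^{(m-1)/2} (mN)^{(m-2)/2} / Γ((m-1)/2)` contributes `log (2πeN)` by Stirling's estimate
`log Γ(x) = x log x - x + O(log x)`, which passes from factorials to all real `x` through the
monotonicity of `Γ` on `[2, ∞)`. The integral contributes `2 log (sin θ)`: as `sin` increases on
`[0, θ]`, `∫₀^θ sin^k` lies between `(θ - t) sin^k t` and `θ sin^k θ` for every `t < θ`.
-/

open Real Filter Topology

open scoped Nat

lemma log_factorial_le {n : ℕ} (hn : n ≠ 0) : log n ! ≤ n * log n - n + log n / 2 + 1 := by
  obtain ⟨k, rfl⟩ := Nat.exists_eq_succ_of_ne_zero hn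
  have hmono : log (Stirling.stirlingSeq (k + 1)) ≤ log (Stirling.stirlingSeq 1) :=
    Stirling.log_stirlingSeq'_antitone (Nat.zero_le k)
  rw [Stirling.log_stirlingSeq_formula, Stirling.stirlingSeq_one,
    log_div (exp_pos 1).ne' (by positivity), log_exp, log_sqrt zero_le_two,
    log_mul two_ne_zero (by positivity), log_div (by positivity) (exp_pos 1).ne', log_exp] at hmono
  linarith

lemma mul_log_sub_self_le_mul_log_sub_self {s t : ℝ} (hs : 1 ≤ s) (hst : s ≤ t) :
    s * log s - s ≤ t * log t - t := by
  have hs0 : 0 < s := by linarith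
  have ht0 : 0 < t := by linarith
  have hratio : 1 - s / t ≤ log t - log s := by
    rw [← log_div ht0.ne' hs0.ne', ← inv_div]
    exact one_sub_inv_le_log_of_pos (by positivity)
  have hts : t * (1 - s / t) = t - s := by field_simp
  nlinarith [log_nonneg hs]

lemma mul_log_sub_self_sub_le {s t : ℝ} (hs : 0 < s) (hst : s ≤ t) :
    t * log t - t - (s * log s - s) ≤ (t - s) * log t := by
  have ht0 : 0 < t := by linarith
  have hratio : log t - log s ≤ t / s - 1 := by
    rw [← log_div ht0.ne' hs.ne']
    exact log_le_sub_one_of_pos (by positivity)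
  have hst' : s * (t / s - 1) = t - s := by field_simp
  nlinarith

lemma abs_log_Gamma_sub_le {x : ℝ} (hx : 3 ≤ x) :
    |log (Gamma x) - (x * log x - x)| ≤ 2 * log x + 1 := by
  have hfloor : 3 ≤ ⌊x⌋₊ := Nat.le_floor (by exact_mod_cast hx)
  obtain ⟨k, hk⟩ : ∃ k, ⌊x⌋₊ = k + 1 := Nat.exists_eq_succ_of_ne_zero (by omega)
  have hkx : (k : ℝ) + 1 ≤ x := by exact_mod_cast hk ▸ Nat.floor_le (by linarith : 0 ≤ x)
  have hxk : x < k + 2 := by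
    have := Nat.lt_floor_add_one x; rw [hk] at this; push_cast at this; linarith
  have hk2 : (2 : ℝ) ≤ k := by exact_mod_cast (by omega : 2 ≤ k)
  have hGamma := Gamma_strictMonoOn_Ici.monotoneOn
  have hlower : (k ! : ℝ) ≤ Gamma x := by
    rw [← Gamma_nat_eq_factorial]
    exact hGamma (Set.mem_Ici.2 (by linarith)) (Set.mem_Ici.2 (by linarith)) hkx
  have hupper : Gamma x ≤ ((k + 1) ! : ℝ) := by
    rw [← Gamma_nat_eq_factorial]; push_cast
    exact hGamma (Set.mem_Ici.2 (by linarith)) (Set.mem_Ici.2 (by linarith)) (by linarith)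
  have hlog_lower : log (k ! : ℝ) ≤ log (Gamma x) := log_le_log (by positivity) hlower
  have hlog_upper : log (Gamma x) ≤ log ((k + 1) ! : ℝ) :=
    log_le_log (Gamma_pos_of_pos (by linarith)) hupper
  have hstirling_lower := Stirling.le_log_factorial_stirling (n := k) (by omega)
  have hstirling_upper := log_factorial_le (n := k + 1) (by positivity)
  push_cast at hstirling_upper
  have hk_pos : (0 : ℝ) < k := by linarith
  have hlog_k : 0 ≤ log k := log_nonneg (by linarith)
  have hlog_k1 : log ((k : ℝ) + 1) ≤ log x := log_le_log (by linarith) hkx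
  have hlog_2pi : 0 ≤ log (2 * π) := log_nonneg (by linarith [pi_gt_three])
  have hmono := mul_log_sub_self_le_mul_log_sub_self (by linarith) hkx
  have hstep : x * log x - x - (k * log k - k) ≤ 2 * log x :=
    (mul_log_sub_self_sub_le hk_pos (by linarith)).trans
      (mul_le_mul_of_nonneg_right (by linarith) (log_nonneg (by linarith)))
  have hlog_x : 0 ≤ log x := log_nonneg (by linarith)
  rw [abs_sub_le_iff]
  constructor <;> linarith

lemma tendsto_log_Gamma_div_sub_log :
    Tendsto (fun x => log (Gamma x) / x - log x) atTop (𝓝 (-1)) := by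
  have hbound : Tendsto (fun x => 2 * (log x / x) + x⁻¹) atTop (𝓝 0) := by
    simpa using ((tendsto_pow_log_div_mul_add_atTop 1 0 1 one_ne_zero).const_mul 2).add
      tendsto_inv_atTop_zero
  rw [tendsto_iff_norm_sub_tendsto_zero]
  refine squeeze_zero' (Eventually.of_forall fun _ => norm_nonneg _) ?_ hbound
  filter_upwards [eventually_ge_atTop 3] with x hx
  have hx0 : 0 < x := by linarith
  calc ‖log (Gamma x) / x - log x - -1‖ = |log (Gamma x) - (x * log x - x)| / x := by
        rw [Real.norm_eq_abs, ← abs_of_pos hx0, ← abs_div, abs_of_pos hx0]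
        congr 1; field_simp; ring
    _ ≤ (2 * log x + 1) / x := by gcongr; exact abs_log_Gamma_sub_le hx
    _ = 2 * (log x / x) + x⁻¹ := by field_simp

section SinPowIntegral

variable {θ : ℝ}

lemma mul_sin_pow_le_integral_sin_pow {t : ℝ} (ht : 0 ≤ t) (htθ : t ≤ θ) (hθ : θ ≤ π / 2)
    (k : ℕ) : (θ - t) * sin t ^ k ≤ ∫ ρ in (0 : ℝ)..θ, sin ρ ^ k := by
  have hint : IntervalIntegrable (fun ρ => sin ρ ^ k) MeasureTheory.volume 0 θ :=
    (continuous_sin.pow k).intervalIntegrable 0 θ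
  have hsin_nonneg : ∀ ρ ∈ Set.Icc 0 θ, 0 ≤ sin ρ := fun ρ hρ =>
    sin_nonneg_of_nonneg_of_le_pi hρ.1 (by linarith [hρ.2, pi_pos])
  calc (θ - t) * sin t ^ k = ∫ _ in t..θ, sin t ^ k := by simp
    _ ≤ ∫ ρ in t..θ, sin ρ ^ k := by
      refine intervalIntegral.integral_mono_on htθ intervalIntegrable_const
        (hint.mono_set ?_) fun ρ hρ => ?_
      · rw [Set.uIcc_of_le htθ, Set.uIcc_of_le (ht.trans htθ)]
        exact Set.Icc_subset_Icc_left ht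
      · exact pow_le_pow_left₀ (hsin_nonneg t ⟨ht, htθ⟩)
          (sin_le_sin_of_le_of_le_pi_div_two (by linarith [pi_pos]) (hρ.2.trans hθ) hρ.1) k
    _ ≤ ∫ ρ in (0 : ℝ)..θ, sin ρ ^ k := by
      refine intervalIntegral.integral_mono_interval ht htθ le_rfl ?_ hint
      filter_upwards [MeasureTheory.ae_restrict_mem measurableSet_Ioc] with ρ hρ
      exact pow_nonneg (hsin_nonneg ρ (Set.Ioc_subset_Icc_self hρ)) k

lemma integral_sin_pow_le (hθ0 : 0 ≤ θ) (hθ : θ ≤ π / 2) (k : ℕ) :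
    ∫ ρ in (0 : ℝ)..θ, sin ρ ^ k ≤ θ * sin θ ^ k := by
  calc ∫ ρ in (0 : ℝ)..θ, sin ρ ^ k ≤ ∫ _ in (0 : ℝ)..θ, sin θ ^ k := by
        refine intervalIntegral.integral_mono_on hθ0 ((continuous_sin.pow k).intervalIntegrable 0 θ)
          intervalIntegrable_const fun ρ hρ => ?_
        exact pow_le_pow_left₀ (sin_nonneg_of_nonneg_of_le_pi hρ.1 (by linarith [hρ.2, pi_pos]))
          (sin_le_sin_of_le_of_le_pi_div_two (by linarith [hρ.1, pi_pos]) hθ hρ.2) k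
    _ = θ * sin θ ^ k := by simp

lemma integral_sin_pow_pos_of_le_pi (hθ0 : 0 < θ) (hθ : θ ≤ π) (k : ℕ) :
    0 < ∫ ρ in (0 : ℝ)..θ, sin ρ ^ k :=
  intervalIntegral.intervalIntegral_pos_of_pos_on ((continuous_sin.pow k).intervalIntegrable 0 θ)
    (fun _ hρ => pow_pos (sin_pos_of_pos_of_lt_pi hρ.1 (hρ.2.trans_le hθ)) k) hθ0

lemma tendsto_log_integral_sin_pow_div (hθ0 : 0 < θ) (hθ : θ ≤ π / 2) :
    Tendsto (fun k : ℕ => log (∫ ρ in (0 : ℝ)..θ, sin ρ ^ k) / k) atTop (𝓝 (log (sin θ))) := by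
  have hθπ : θ < π := by linarith [pi_pos]
  have hlim : ∀ a b : ℝ, Tendsto (fun k : ℕ => a / k + b) atTop (𝓝 b) := fun a b => by
    simpa using (tendsto_const_div_atTop_nhds_zero_nat a).add_const b
  rw [tendsto_order]
  refine ⟨fun c hc => ?_, fun c hc => ?_⟩
  · obtain ⟨t, hct, htθ⟩ : ∃ t, c < log (sin t) ∧ t ∈ Set.Ioo 0 θ := by
      have hcont : ContinuousAt (fun t => log (sin t)) θ :=
        (continuousAt_log (sin_pos_of_pos_of_lt_pi hθ0 hθπ).ne').comp continuous_sin.continuousAt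
      exact ((hcont.continuousWithinAt.eventually_const_lt hc).and
        (Ioo_mem_nhdsLT hθ0)).exists
    have hsin_t : 0 < sin t := sin_pos_of_pos_of_lt_pi htθ.1 (htθ.2.trans hθπ)
    filter_upwards [(hlim (log (θ - t)) _).eventually_const_lt hct, eventually_gt_atTop 0]
      with k hk hk0
    refine hk.trans_le ?_
    rw [le_div_iff₀ (by positivity)]
    calc (log (θ - t) / k + log (sin t)) * k = log ((θ - t) * sin t ^ k) := by
          rw [log_mul (by linarith [htθ.2]) (by positivity), log_pow]; field_simp
      _ ≤ log (∫ ρ in (0 : ℝ)..θ, sin ρ ^ k) :=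
          log_le_log (mul_pos (by linarith [htθ.2]) (by positivity))
            (mul_sin_pow_le_integral_sin_pow htθ.1.le htθ.2.le hθ k)
  · filter_upwards [(hlim (log θ) _).eventually_lt_const hc, eventually_gt_atTop 0] with k hk hk0
    refine lt_of_le_of_lt ?_ hk
    rw [div_le_iff₀ (by positivity)]
    calc log (∫ ρ in (0 : ℝ)..θ, sin ρ ^ k) ≤ log (θ * sin θ ^ k) :=
          log_le_log (integral_sin_pow_pos_of_le_pi hθ0 hθπ.le k) (integral_sin_pow_le hθ0.le hθ k)
      _ = (log θ / k + log (sin θ)) * k := by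
          rw [log_mul hθ0.ne' (pow_pos (sin_pos_of_pos_of_lt_pi hθ0 hθπ) k).ne', log_pow]
          field_simp

end SinPowIntegral

/-- The area of the equator `S^{m-2}` of the sphere of radius `√(mN)` in `ℝ^m`. -/
noncomputable def equatorArea (N : ℝ) (m : ℕ) : ℝ :=
  2 * π ^ (((m : ℝ) - 1) / 2) / Gamma (((m : ℝ) - 1) / 2) * ((m : ℝ) * N) ^ (((m : ℝ) - 2) / 2)

lemma equatorArea_pos {N : ℝ} (hN : 0 < N) {m : ℕ} (hm : 2 ≤ m) : 0 < equatorArea N m := by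
  have hm' : (2 : ℝ) ≤ m := by exact_mod_cast hm
  have hGamma := Gamma_pos_of_pos (by linarith : (0 : ℝ) < ((m : ℝ) - 1) / 2)
  unfold equatorArea
  positivity

lemma log_equatorArea_div_eq {N : ℝ} (hN : 0 < N) {m : ℕ} (hm : 2 ≤ m) :
    log (equatorArea N m) / (m / 2) =
      2 * log 2 / m + (1 - 1 / m) * (log π
        - (log (Gamma (((m : ℝ) - 1) / 2)) / (((m : ℝ) - 1) / 2) - log (((m : ℝ) - 1) / 2))
        + log (2 * N / (1 - 1 / m))) - (log m / m + log N / m) := by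
  have hm' : (2 : ℝ) ≤ m := by exact_mod_cast hm
  have hGamma := Gamma_pos_of_pos (by linarith : (0 : ℝ) < ((m : ℝ) - 1) / 2)
  have h1 : (1 : ℝ) - 1 / m = ((m : ℝ) - 1) / m := by field_simp
  have hm1 : (0 : ℝ) < m - 1 := by linarith
  rw [h1, div_div_eq_mul_div, equatorArea, log_mul (div_pos (by positivity) hGamma).ne'
    (by positivity), log_div (by positivity) hGamma.ne', log_mul two_ne_zero (by positivity),
    log_rpow pi_pos, log_rpow (by positivity), log_mul (by positivity) hN.ne',
    log_div hm1.ne' two_ne_zero, log_div (by positivity : 2 * N ≠ 0) (by positivity),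
    log_div hm1.ne' (by positivity), log_mul two_ne_zero hN.ne']
  field_simp
  ring

lemma tendsto_log_equatorArea_div {N : ℝ} (hN : 0 < N) :
    Tendsto (fun m : ℕ => log (equatorArea N m) / (m / 2)) atTop
      (𝓝 (log (2 * π * exp 1 * N))) := by
  have hratio : Tendsto (fun m : ℕ => 1 - 1 / (m : ℝ)) atTop (𝓝 1) := by
    simpa using (tendsto_one_div_atTop_nhds_zero_nat (𝕜 := ℝ)).const_sub 1
  have hGamma := tendsto_log_Gamma_div_sub_log.comp
    ((tendsto_natCast_atTop_atTop.atTop_add (tendsto_const_nhds (x := (-1 : ℝ)))).atTop_div_const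
      two_pos)
  have hlog_ratio : Tendsto (fun m : ℕ => log (2 * N / (1 - 1 / (m : ℝ)))) atTop
      (𝓝 (log (2 * N / 1))) :=
    (tendsto_const_nhds.div hratio one_ne_zero).log (by positivity)
  have hlog_div : Tendsto (fun m : ℕ => log (m : ℝ) / m) atTop (𝓝 0) := by
    simpa [Function.comp_def] using (tendsto_pow_log_div_mul_add_atTop 1 0 1 one_ne_zero).comp
      tendsto_natCast_atTop_atTop
  have hlim := ((tendsto_const_div_atTop_nhds_zero_nat (2 * log 2)).add
    (hratio.mul (((tendsto_const_nhds (x := log π)).sub hGamma).add hlog_ratio))).sub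
    (hlog_div.add (tendsto_const_div_atTop_nhds_zero_nat (log N)))
  refine (hlim.congr' ?_).trans_eq ?_
  · filter_upwards [eventually_ge_atTop 2] with m hm
    simp only [Function.comp_apply]
    rw [log_equatorArea_div_eq hN hm, sub_eq_add_neg (m : ℝ)]
  · rw [log_mul (by positivity) hN.ne', log_mul (by positivity) (exp_pos 1).ne',
      log_mul (by positivity) pi_pos.ne', log_exp, div_one, log_mul two_ne_zero hN.ne']
    congr 1
    ring

lemma eventually_rpow_le_and_le_rpow {ι : Type*} {l : Filter ι} {a s : ι → ℝ} {b ℓ ε : ℝ}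
    (hb : 1 < b) (ha : ∀ᶠ i in l, 0 < a i) (hs : ∀ᶠ i in l, 0 < s i)
    (h : Tendsto (fun i => logb b (a i) / s i) l (𝓝 ℓ)) (hε : 0 < ε) :
    ∀ᶠ i in l, b ^ (s i * (ℓ - ε)) ≤ a i ∧ a i ≤ b ^ (s i * (ℓ + ε)) := by
  filter_upwards [ha, hs,
    h.eventually (Ioo_mem_nhds (sub_lt_self ℓ hε) (lt_add_of_pos_right ℓ hε))] with i hai hsi hi
  rw [← le_logb_iff_rpow_le hb hai, ← logb_le_iff_le_rpow hb hai]
  rw [lt_div_iff₀ hsi, div_lt_iff₀ hsi] at hi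
  constructor <;> linarith [mul_comm (s i) (ℓ - ε), mul_comm (s i) (ℓ + ε)]

lemma tendsto_log_equatorArea_mul_integral_sin_pow_div {N θ : ℝ} (hN : 0 < N) (hθ0 : 0 < θ)
    (hθ : θ ≤ π / 2) :
    Tendsto (fun m : ℕ => log (equatorArea N m * ∫ ρ in (0 : ℝ)..θ, sin ρ ^ (m - 2)) / (m / 2))
      atTop (𝓝 (log (2 * π * exp 1 * N * sin θ ^ 2))) := by
  have hintegral : Tendsto (fun m : ℕ => log (∫ ρ in (0 : ℝ)..θ, sin ρ ^ (m - 2)) / (m - 2 : ℕ))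
      atTop (𝓝 (log (sin θ))) :=
    (tendsto_log_integral_sin_pow_div hθ0 hθ).comp (tendsto_sub_atTop_nat 2)
  have hscale : Tendsto (fun m : ℕ => ((m - 2 : ℕ) : ℝ) / (m / 2)) atTop (𝓝 2) := by
    refine (((tendsto_const_div_atTop_nhds_zero_nat (4 : ℝ)).const_sub (2 : ℝ)).congr' ?_).trans_eq
      (by rw [sub_zero])
    filter_upwards [eventually_ge_atTop 2] with m hm
    have hm0 : (m : ℝ) ≠ 0 := by positivity
    rw [Nat.cast_sub hm]
    field_simp
    ring
  refine (((tendsto_log_equatorArea_div hN).add (hintegral.mul hscale)).congr' ?_).trans_eq ?_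
  · filter_upwards [eventually_ge_atTop 3] with m hm
    have hm2 : ((m - 2 : ℕ) : ℝ) ≠ 0 := Nat.cast_ne_zero.mpr (by omega)
    rw [log_mul (equatorArea_pos hN (by omega)).ne'
      (integral_sin_pow_pos_of_le_pi hθ0 (by linarith [pi_pos]) _).ne', add_div,
      div_mul_div_cancel₀ hm2]
  · have hsin : 0 < sin θ := sin_pos_of_pos_of_lt_pi hθ0 (by linarith [pi_pos])
    congr 1
    rw [log_mul (by positivity) (pow_pos hsin 2).ne', log_pow]
    push_cast
    ring

/-- exponential characterization of the surface area of a spherical cap of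
angle `θ ∈ (0, π/2)` on the sphere of radius `√(mN)` in `ℝ^m`, whose area is
`(2π^{(m-1)/2}/Γ((m-1)/2)) (mN)^{(m-2)/2} ∫₀^θ sin^{m-2}ρ dρ`: for every `ε > 0` and all
sufficiently large `m` it lies between `2^{(m/2)(log₂(2πeN sin²θ) ∓ ε)}`. -/
theorem stmt_8 (N : ℝ) (hN : 0 < N) (θ : ℝ) (hθ : θ ∈ Set.Ioo 0 (π / 2)) :
    ∀ ε : ℝ, 0 < ε → ∃ M : ℕ, ∀ m : ℕ, M ≤ m →
      (2 : ℝ) ^ (((m : ℝ) / 2) * (Real.logb 2 (2 * π * Real.exp 1 * N * Real.sin θ ^ 2) - ε)) ≤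
        ((2 * π ^ (((m : ℝ) - 1) / 2) / Real.Gamma (((m : ℝ) - 1) / 2)) *
          ((m : ℝ) * N) ^ (((m : ℝ) - 2) / 2) * (∫ ρ in (0:ℝ)..θ, Real.sin ρ ^ (m - 2))) ∧
      (2 * π ^ (((m : ℝ) - 1) / 2) / Real.Gamma (((m : ℝ) - 1) / 2)) *
          ((m : ℝ) * N) ^ (((m : ℝ) - 2) / 2) * (∫ ρ in (0:ℝ)..θ, Real.sin ρ ^ (m - 2)) ≤
        (2 : ℝ) ^ (((m : ℝ) / 2) * (Real.logb 2 (2 * π * Real.exp 1 * N * Real.sin θ ^ 2) + ε)) := by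
  obtain ⟨hθ0, hθ⟩ := hθ
  intro ε hε
  have hpos : ∀ᶠ m : ℕ in atTop, 0 < equatorArea N m * ∫ ρ in (0 : ℝ)..θ, sin ρ ^ (m - 2) := by
    filter_upwards [eventually_ge_atTop 2] with m hm
    exact mul_pos (equatorArea_pos hN hm)
      (integral_sin_pow_pos_of_le_pi hθ0 (by linarith [pi_pos]) _)
  have hscale : ∀ᶠ m : ℕ in atTop, (0 : ℝ) < m / 2 := by
    filter_upwards [eventually_gt_atTop 0] with m hm
    positivity
  have hlim := (tendsto_log_equatorArea_mul_integral_sin_pow_div hN hθ0 hθ.le).div_const (log 2)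
  simp only [div_right_comm _ _ (log 2), log_div_log] at hlim
  exact eventually_atTop.1 (eventually_rpow_le_and_le_rpow one_lt_two hpos hscale hlim hε)
end

section
/- For any θ ∈ (0, π/2) and all sufficiently large m, (1/m) 2^{((m-2)/2) log sin²(θ − 1/m)} ≥ 2^{(m/2)(log sin²θ − ε)} and ∫₀^θ sin^{m-2}ρ dρ ≤ θ · 2^{((m-2)/2) log sin²θ}, so that for every ε > 0 there exists M with 2^{(m/2)(log sin²θ − ε)} ≤ ∫₀^θ sin^{m-2}ρ dρ ≤ 2^{(m/2)(log sin²θ + ε)} for all m ≥ M. -/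
open Real

open Filter

lemma aux_exp (c K : ℝ) (hc : 0 < c) :
    ∀ᶠ m : ℕ in atTop, K * m ≤ Real.exp (c * m) := by
  filter_upwards [eventually_ge_atTop ⌈4 * K / c ^ 2⌉₊] with m hm
  have hm' : 4 * K / c ^ 2 ≤ (m : ℝ) := le_trans (Nat.le_ceil _) (by exact_mod_cast hm)
  have hm0 : (0:ℝ) ≤ m := Nat.cast_nonneg m
  have h1 : K ≤ c ^ 2 * m / 4 := by
    rw [div_le_iff₀ (by positivity)] at hm'
    nlinarith
  have h0 : 0 ≤ c * m / 2 := by positivity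
  have h2 : (c * m / 2) ^ 2 ≤ Real.exp (c * m) := by
    have he := Real.add_one_le_exp (c * m / 2)
    have hep : 0 < Real.exp (c * m / 2) := Real.exp_pos _
    calc (c * m / 2) ^ 2 ≤ (c * m / 2 + 1) ^ 2 := by nlinarith
      _ ≤ Real.exp (c * m / 2) ^ 2 := by nlinarith
      _ = Real.exp (c * m) := by rw [sq, ← Real.exp_add]; ring_nf
  nlinarith

lemma two_rpow_logb_sq (x a : ℝ) (hx : 0 < x) :
    (2:ℝ) ^ (a * Real.logb 2 (x ^ 2)) = x ^ (2 * a) := by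
  rw [mul_comm, Real.rpow_mul (by norm_num : (0:ℝ) ≤ 2),
    Real.rpow_logb (by norm_num) (by norm_num) (by positivity),
    ← Real.rpow_natCast x 2, ← Real.rpow_mul hx.le]
  norm_num

lemma exp_neg_le_one_sub (x : ℝ) (hx0 : 0 ≤ x) (hx : x ≤ 1/2) :
    Real.exp (-(2*x)) ≤ 1 - x := by
  have h1 : 1 + 2*x ≤ Real.exp (2*x) := by linarith [Real.add_one_le_exp (2*x)]
  rw [Real.exp_neg, inv_le_iff_one_le_mul₀ (Real.exp_pos _)]
  nlinarith [Real.exp_pos (2*x)]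

lemma sin_sub_le (a b : ℝ) (h : b ≤ a) (hd : a - b ≤ 2*π) :
    Real.sin a - Real.sin b ≤ a - b := by
  rw [Real.sin_sub_sin]
  have h1 : Real.sin ((a-b)/2) ≤ (a-b)/2 := Real.sin_le (by linarith)
  have h2 : 0 ≤ Real.sin ((a-b)/2) := Real.sin_nonneg_of_nonneg_of_le_pi (by linarith) (by linarith)
  nlinarith [Real.cos_le_one ((a+b)/2), Real.neg_one_le_cos ((a+b)/2)]

set_option maxHeartbeats 1000000 in
/-- exponential estimates for `∫₀^θ sin^{m-2}ρ dρ` with `θ ∈ (0, π/2)`: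
for every `ε > 0` there is `M` such that for all `m ≥ M`,
`(1/m)·2^{((m-2)/2)·log₂ sin²(θ − 1/m)} ≥ 2^{(m/2)(log₂ sin²θ − ε)}`,
`∫₀^θ sin^{m-2}ρ dρ ≤ θ·2^{((m-2)/2)·log₂ sin²θ}`, and consequently
`2^{(m/2)(log₂ sin²θ − ε)} ≤ ∫₀^θ sin^{m-2}ρ dρ ≤ 2^{(m/2)(log₂ sin²θ + ε)}`. -/
theorem stmt_9 (θ : ℝ) (hθ : θ ∈ Set.Ioo 0 (π / 2)) :
    ∀ ε : ℝ, 0 < ε → ∃ M : ℕ, ∀ m : ℕ, M ≤ m →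
      ((2 : ℝ) ^ (((m : ℝ) / 2) * (Real.logb 2 (Real.sin θ ^ 2) - ε)) ≤
        (1 / (m : ℝ)) *
          (2 : ℝ) ^ ((((m : ℝ) - 2) / 2) * Real.logb 2 (Real.sin (θ - 1 / (m : ℝ)) ^ 2))) ∧
      ((∫ ρ in (0:ℝ)..θ, Real.sin ρ ^ (m - 2)) ≤
        θ * (2 : ℝ) ^ ((((m : ℝ) - 2) / 2) * Real.logb 2 (Real.sin θ ^ 2))) ∧
      ((2 : ℝ) ^ (((m : ℝ) / 2) * (Real.logb 2 (Real.sin θ ^ 2) - ε)) ≤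
        ∫ ρ in (0:ℝ)..θ, Real.sin ρ ^ (m - 2)) ∧
      ((∫ ρ in (0:ℝ)..θ, Real.sin ρ ^ (m - 2)) ≤
        (2 : ℝ) ^ (((m : ℝ) / 2) * (Real.logb 2 (Real.sin θ ^ 2) + ε))) := by
  obtain ⟨hθ0, hθπ⟩ := hθ
  have hπ0 := Real.pi_pos
  intro ε hε
  set s := Real.sin θ with hs_def
  have hs0 : 0 < s := by
    rw [hs_def]; exact Real.sin_pos_of_pos_of_lt_pi hθ0 (by linarith)
  have hs1 : s ≤ 1 := by rw [hs_def]; exact Real.sin_le_one θ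
  set c : ℝ := Real.log 2 * (ε / 2) with hc_def
  have hlog2 : 0 < Real.log 2 := Real.log_pos one_lt_two
  have hc : 0 < c := by rw [hc_def]; positivity
  clear_value c
  rw [← Filter.eventually_atTop]
  have hsmall : ∀ a : ℝ, 0 < a → ∀ᶠ m : ℕ in atTop, 1 / (m:ℝ) ≤ a := by
    intro a ha
    exact tendsto_one_div_atTop_nhds_zero_nat.eventually_le_const ha
  filter_upwards [eventually_ge_atTop 2, hsmall (θ/2) (by positivity),
    hsmall (s/2) (by positivity),
    aux_exp c (s^2 * Real.exp (2/s)) hc, aux_exp c (θ / s^2) hc] with m hm2 hmθ hms hK1 hK2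
  have hm1 : 1 ≤ m := le_trans one_le_two hm2
  have hm0' : (0:ℝ) < (m:ℝ) := by exact_mod_cast lt_of_lt_of_le (by norm_num : (0:ℕ) < 2) hm2
  have hmR2 : (2:ℝ) ≤ (m:ℝ) := by exact_mod_cast hm2
  have hcast : ((m - 2 : ℕ) : ℝ) = (m:ℝ) - 2 := by
    push_cast [Nat.cast_sub hm2]; ring
  set u : ℝ := θ - 1/(m:ℝ) with hu_def
  have hum : (0:ℝ) < 1/(m:ℝ) := by positivity
  have hu0 : 0 < u := by rw [hu_def]; linarith
  have huθ : u < θ := by rw [hu_def]; linarith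
  have huπ : u < π/2 := lt_trans huθ hθπ
  set t := Real.sin u with ht_def
  have ht0 : 0 < t := by
    rw [ht_def]; exact Real.sin_pos_of_pos_of_lt_pi hu0 (by linarith)
  clear_value t
  have hθu : θ - u = 1/(m:ℝ) := by rw [hu_def]; ring
  clear_value u
  -- Lipschitz-type bound
  have hts : s - 1/(m:ℝ) ≤ t := by
    have h := sin_sub_le θ u huθ.le (by rw [hθu]; linarith)
    rw [← hs_def, ← ht_def] at h
    have h' : s - t ≤ 1/(m:ℝ) := hθu ▸ h
    linarith
  -- basic estimate on 1/(m*s)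
  have h1ms : 1/((m:ℝ)*s) ≤ 1/2 := by
    have h2 : 2 ≤ (m:ℝ)*s := by
      rw [div_le_div_iff₀ hm0' two_pos] at hms
      nlinarith
    rw [div_le_div_iff₀ (by positivity) two_pos]
    nlinarith
  have hbase : s * Real.exp (-(2*(1/((m:ℝ)*s)))) ≤ t := by
    have hx := exp_neg_le_one_sub (1/((m:ℝ)*s)) (by positivity) h1ms
    have h2 : s * Real.exp (-(2*(1/((m:ℝ)*s)))) ≤ s * (1 - 1/((m:ℝ)*s)) :=
      mul_le_mul_of_nonneg_left hx hs0.le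
    have h3 : s * (1 - 1/((m:ℝ)*s)) = s - 1/(m:ℝ) := by field_simp
    linarith
  have hfac : Real.exp (-(2/s)) ≤ Real.exp (-(2*(1/((m:ℝ)*s)))) ^ (m-2) := by
    rw [← Real.exp_nat_mul]
    apply Real.exp_le_exp.mpr
    rw [hcast]
    have e1 : ((m:ℝ)-2) * -(2*(1/((m:ℝ)*s))) = -((2*((m:ℝ)-2))/((m:ℝ)*s)) := by ring
    rw [e1, neg_le_neg_iff, div_le_div_iff₀ (by positivity) hs0]
    nlinarith
  have hpow : s^(m-2) * Real.exp (-(2/s)) ≤ t^(m-2) := by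
    calc s^(m-2) * Real.exp (-(2/s))
        ≤ s^(m-2) * Real.exp (-(2*(1/((m:ℝ)*s))))^(m-2) :=
          mul_le_mul_of_nonneg_left hfac (pow_nonneg hs0.le _)
      _ = (s * Real.exp (-(2*(1/((m:ℝ)*s)))))^(m-2) := (mul_pow _ _ _).symm
      _ ≤ t^(m-2) := pow_le_pow_left₀ (by positivity) hbase _
  have hsm : s^m = s^(m-2) * s^2 := by rw [← pow_add, Nat.sub_add_cancel hm2]
  -- key inequality
  have hK1' : s^2*(m:ℝ) ≤ Real.exp (c*m) * Real.exp (-(2/s)) := by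
    have h := mul_le_mul_of_nonneg_right hK1 (Real.exp_pos (-(2/s))).le
    have heq : s^2 * Real.exp (2/s) * (m:ℝ) * Real.exp (-(2/s)) = s^2*(m:ℝ) := by
      rw [Real.exp_neg]; field_simp
    linarith [h, heq.symm.le, heq.le]
  have key : s^(m-2)*s^2*(m:ℝ) ≤ t^(m-2) * Real.exp (c*m) := by
    calc s^(m-2)*s^2*(m:ℝ) = s^(m-2) * (s^2*(m:ℝ)) := by ring
      _ ≤ s^(m-2) * (Real.exp (c*m) * Real.exp (-(2/s))) :=
          mul_le_mul_of_nonneg_left hK1' (pow_nonneg hs0.le _)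
      _ = (s^(m-2) * Real.exp (-(2/s))) * Real.exp (c*m) := by ring
      _ ≤ t^(m-2) * Real.exp (c*m) :=
          mul_le_mul_of_nonneg_right hpow (Real.exp_pos _).le
  have hG1 : s^m / Real.exp (c*(m:ℝ)) ≤ (1/(m:ℝ)) * t^(m-2) := by
    rw [div_le_iff₀ (Real.exp_pos _), hsm]
    calc s^(m-2)*s^2 = 1/(m:ℝ) * (s^(m-2)*s^2*(m:ℝ)) := by field_simp
      _ ≤ 1/(m:ℝ) * (t^(m-2) * Real.exp (c*m)) :=
          mul_le_mul_of_nonneg_left key (by positivity)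
      _ = 1/(m:ℝ) * t^(m-2) * Real.exp (c*(m:ℝ)) := by ring
  -- integral upper bound
  have hintc : ∀ a b : ℝ, IntervalIntegrable (fun ρ => Real.sin ρ ^ (m-2))
      MeasureTheory.volume a b := fun a b => (continuous_sin.pow _).intervalIntegrable _ _
  have hG2 : (∫ ρ in (0:ℝ)..θ, Real.sin ρ ^ (m-2)) ≤ θ * s^(m-2) := by
    have h := intervalIntegral.integral_mono_on hθ0.le (hintc 0 θ)
      (intervalIntegrable_const (c := s^(m-2))) ?_
    · simpa using h
    · intro x hx
      have hsx : Real.sin x ≤ s := by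
        rw [hs_def]
        exact Real.sin_le_sin_of_le_of_le_pi_div_two (by linarith [hx.1]) hθπ.le hx.2
      exact pow_le_pow_left₀ (Real.sin_nonneg_of_nonneg_of_le_pi hx.1 (by linarith [hx.2])) hsx _
  -- integral lower bound
  have hG3 : (1/(m:ℝ)) * t^(m-2) ≤ ∫ ρ in (0:ℝ)..θ, Real.sin ρ ^ (m-2) := by
    rw [← intervalIntegral.integral_add_adjacent_intervals (hintc 0 u) (hintc u θ)]
    have h1 : 0 ≤ ∫ ρ in (0:ℝ)..u, Real.sin ρ ^ (m-2) :=
      intervalIntegral.integral_nonneg hu0.le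
        (fun x hx => pow_nonneg (Real.sin_nonneg_of_nonneg_of_le_pi hx.1 (by linarith [hx.2])) _)
    have h2 : (1/(m:ℝ)) * t^(m-2) ≤ ∫ ρ in u..θ, Real.sin ρ ^ (m-2) := by
      have h := intervalIntegral.integral_mono_on huθ.le
        (intervalIntegrable_const (c := t^(m-2))) (hintc u θ) ?_
      · simpa [hθu] using h
      · intro x hx
        have htx : t ≤ Real.sin x := by
          rw [ht_def]
          exact Real.sin_le_sin_of_le_of_le_pi_div_two (by linarith [hx.1, hu0]) (by linarith [hx.2]) hx.1
        exact pow_le_pow_left₀ ht0.le htx _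
    linarith
  -- rpow ↔ pow conversions
  have eq2 : (2:ℝ) ^ ((((m:ℝ)-2)/2) * Real.logb 2 (t^2)) = t^(m-2) := by
    rw [two_rpow_logb_sq _ _ ht0, show 2*(((m:ℝ)-2)/2) = ((m:ℝ)-2) by ring, ← hcast,
      Real.rpow_natCast]
  have eq3 : (2:ℝ) ^ ((((m:ℝ)-2)/2) * Real.logb 2 (s^2)) = s^(m-2) := by
    rw [two_rpow_logb_sq _ _ hs0, show 2*(((m:ℝ)-2)/2) = ((m:ℝ)-2) by ring, ← hcast,
      Real.rpow_natCast]
  have eqm : (2:ℝ) ^ (((m:ℝ)/2) * Real.logb 2 (s^2)) = s^m := by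
    rw [two_rpow_logb_sq _ _ hs0, show 2*((m:ℝ)/2) = ((m:ℕ):ℝ) by push_cast; ring,
      Real.rpow_natCast]
  have eqe : (2:ℝ) ^ (((m:ℝ)/2) * ε) = Real.exp (c*(m:ℝ)) := by
    rw [Real.rpow_def_of_pos two_pos, hc_def]
    ring_nf
  have eq1 : (2:ℝ) ^ (((m:ℝ)/2) * (Real.logb 2 (s^2) - ε)) = s^m / Real.exp (c*(m:ℝ)) := by
    rw [mul_sub, Real.rpow_sub two_pos, eqm, eqe]
  have eq4 : (2:ℝ) ^ (((m:ℝ)/2) * (Real.logb 2 (s^2) + ε)) = s^m * Real.exp (c*(m:ℝ)) := by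
    rw [mul_add, Real.rpow_add two_pos, eqm, eqe]
  refine ⟨?_, ?_, ?_, ?_⟩
  · rw [eq1, eq2]; exact hG1
  · rw [eq3]; exact hG2
  · rw [eq1]; exact le_trans hG1 hG3
  · rw [eq4]
    have hθle : θ ≤ s^2 * Real.exp (c*(m:ℝ)) := by
      have h1 : θ/s^2 ≤ (θ/s^2) * m :=
        le_mul_of_one_le_right (by positivity) (by exact_mod_cast hm1)
      have h2 : θ/s^2 ≤ Real.exp (c*(m:ℝ)) := le_trans h1 hK2
      rw [div_le_iff₀ (by positivity)] at h2
      linarith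
    calc (∫ ρ in (0:ℝ)..θ, Real.sin ρ ^ (m-2)) ≤ θ * s^(m-2) := hG2
      _ ≤ (s^2 * Real.exp (c*(m:ℝ))) * s^(m-2) :=
          mul_le_mul_of_nonneg_right hθle (pow_nonneg hs0.le _)
      _ = s^m * Real.exp (c*(m:ℝ)) := by rw [hsm]; ring
end
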